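/- Consider the softmax weights w_j(z) = exp(f_j(z)) / Σ_{j'} exp(f_{j'}(z)) on ℝ^d, where f_j is differentiable. If ‖∇f_j(z) - ∇f_{j'}(z)‖₂ ≤ C for all pairs j, j' and all z, then the gradient of each weight satisfies ‖∇w_j(z)‖₂ ≤ C · w_j(z). -/

import Mathlib

/-!
Writing the softmax weight as `w_j = exp (f_j - log ∑ₖ exp f_k)` and differentiating gives
`∇w_j = w_j • (∇f_j - ∑ₖ w_k • ∇f_k)`. Since the weights `w_k` are nonnegative and sum to one,
`∇f_j - ∑ₖ w_k • ∇f_k = ∑ₖ w_k • (∇f_j - ∇f_k)` has norm at most `C`.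
-/

open Real

section Softmax

variable {ι : Type*} [Fintype ι]

noncomputable def softmax (v : ι → ℝ) (j : ι) : ℝ :=
  exp (v j) / ∑ k, exp (v k)

lemma sum_exp_pos (v : ι → ℝ) (j : ι) : 0 < ∑ k, exp (v k) :=
  Finset.sum_pos (fun k _ => exp_pos (v k)) ⟨j, Finset.mem_univ j⟩

lemma softmax_pos (v : ι → ℝ) (j : ι) : 0 < softmax v j :=
  div_pos (exp_pos _) (sum_exp_pos v j)

lemma sum_softmax [Nonempty ι] (v : ι → ℝ) : ∑ k, softmax v k = 1 := by
  obtain ⟨j⟩ := ‹Nonempty ι›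
  simp only [softmax]
  rw [← Finset.sum_div, div_self (sum_exp_pos v j).ne']

lemma softmax_eq_exp_sub_log (v : ι → ℝ) (j : ι) :
    softmax v j = exp (v j - log (∑ k, exp (v k))) := by
  rw [exp_sub, exp_log (sum_exp_pos v j), softmax]

variable {E : Type*} [NormedAddCommGroup E] [NormedSpace ℝ E]

theorem HasFDerivAt.softmax {f : ι → E → ℝ} {f' : ι → E →L[ℝ] ℝ} {z : E}
    (hf : ∀ k, HasFDerivAt (f k) (f' k) z) (j : ι) :
    HasFDerivAt (fun x => _root_.softmax (fun k => f k x) j)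
      (_root_.softmax (fun k => f k z) j •
        (f' j - ∑ k, _root_.softmax (fun k => f k z) k • f' k)) z := by
  have hsum : HasFDerivAt (fun x => ∑ k, Real.exp (f k x)) (∑ k, Real.exp (f k z) • f' k) z :=
    HasFDerivAt.fun_sum fun k _ => (hf k).exp
  have hlog := hsum.log (sum_exp_pos (fun k => f k z) j).ne'
  have hw := ((hf j).fun_sub hlog).exp
  rw [funext fun x => softmax_eq_exp_sub_log (fun k => f k x) j]
  convert hw using 1
  rw [← softmax_eq_exp_sub_log (fun k => f k z), Finset.smul_sum]
  simp only [_root_.softmax, div_eq_inv_mul, smul_smul]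

theorem HasGradientAt.softmax {F : Type*} [NormedAddCommGroup F] [InnerProductSpace ℝ F]
    [CompleteSpace F] {f : ι → F → ℝ} {g : ι → F} {z : F}
    (hf : ∀ k, HasGradientAt (f k) (g k) z) (j : ι) :
    HasGradientAt (fun x => _root_.softmax (fun k => f k x) j)
      (_root_.softmax (fun k => f k z) j •
        (g j - ∑ k, _root_.softmax (fun k => f k z) k • g k)) z := by
  rw [hasGradientAt_iff_hasFDerivAt]
  simpa only [map_smul, map_sub, map_sum] using
    HasFDerivAt.softmax (fun k => hasGradientAt_iff_hasFDerivAt.mp (hf k)) j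

end Softmax

lemma norm_sub_sum_smul_le {ι E : Type*} [Fintype ι] [SeminormedAddCommGroup E]
    [NormedSpace ℝ E] {w : ι → ℝ} (hw₀ : ∀ k, 0 ≤ w k) (hw₁ : ∑ k, w k = 1)
    {v : ι → E} {j : ι} {C : ℝ} (hv : ∀ k, ‖v j - v k‖ ≤ C) :
    ‖v j - ∑ k, w k • v k‖ ≤ C := by
  have hcomb : v j - ∑ k, w k • v k = ∑ k, w k • (v j - v k) := by
    simp only [smul_sub, Finset.sum_sub_distrib, ← Finset.sum_smul, hw₁, one_smul]
  calc ‖v j - ∑ k, w k • v k‖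
      ≤ ∑ k, ‖w k • (v j - v k)‖ := hcomb ▸ norm_sum_le _ _
    _ ≤ ∑ k, w k * C := by
        gcongr with k
        rw [norm_smul, Real.norm_of_nonneg (hw₀ k)]
        exact mul_le_mul_of_nonneg_left (hv k) (hw₀ k)
    _ = C := by rw [← Finset.sum_mul, hw₁, one_mul]

theorem stmt_7_general {J d : ℕ} (f : Fin J → EuclideanSpace ℝ (Fin d) → ℝ)
    (hf : ∀ j, Differentiable ℝ (f j))
    (C : ℝ)
    (hgrad : ∀ j j' z, ‖gradient (f j) z - gradient (f j') z‖ ≤ C) :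
    ∀ j z, ‖gradient (fun x => Real.exp (f j x) / ∑ j', Real.exp (f j' x)) z‖ ≤
      C * (Real.exp (f j z) / ∑ j', Real.exp (f j' z)) := by
  intro j z
  have : Nonempty (Fin J) := ⟨j⟩
  have hgradw := (HasGradientAt.softmax (fun k => (hf k z).hasGradientAt) j).gradient
  have hbound : ‖gradient (f j) z - ∑ k, softmax (fun k => f k z) k • gradient (f k) z‖ ≤ C :=
    norm_sub_sum_smul_le (v := fun k => gradient (f k) z) (fun k => (softmax_pos _ k).le)
      (sum_softmax _) (hgrad j · z)
  change ‖gradient (fun x => softmax (fun k => f k x) j) z‖ ≤ C * softmax (fun k => f k z) j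
  rw [hgradw, norm_smul, Real.norm_of_nonneg (softmax_pos _ j).le, mul_comm]
  exact mul_le_mul_of_nonneg_right hbound (softmax_pos _ j).le

/-- For softmax weights `w j z = exp (f j z) / ∑ j', exp (f j' z)` with differentiable `f j`,
if the gradients satisfy `‖∇f j z - ∇f j' z‖ ≤ C` for all pairs, then
`‖∇ (w j) z‖ ≤ C * w j z`. -/
theorem stmt_7 {J d : ℕ} (hJ : 0 < J) (f : Fin J → EuclideanSpace ℝ (Fin d) → ℝ)
    (hf : ∀ j, Differentiable ℝ (f j))
    (C : ℝ) (hC : 0 ≤ C)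
    (hgrad : ∀ j j' z, ‖gradient (f j) z - gradient (f j') z‖ ≤ C) :
    ∀ j z, ‖gradient (fun x => Real.exp (f j x) / ∑ j', Real.exp (f j' x)) z‖ ≤
      C * (Real.exp (f j z) / ∑ j', Real.exp (f j' z)) :=
  stmt_7_general f hf C hgrad
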